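/- General form of Rule (b): in a well-formed execution trace, if two critical sections on the same lock m, with indices i < j, contain CP-ordered events — that is, there are events f and f' with acq(m,i) ≤PO f ≤PO rel(m,i), acq(m,j) ≤PO f' ≤PO rel(m,j), and f CP f' — then acq(m,i) CP rel(m,j) and hence rel(m,i) CP acq(m,j). -/
import Mathlib


/-- An event of an execution trace: the `i`-th write to variable `x`,
a read of variable `x` by thread `T` between the `i`-th and `(i+1)`-th writes,
the `i`-th acquire of lock `m`, or the `i`-th release of lock `m`. -/
inductive Event where
  | write (x i : ℕ)
  | read (x i T : ℕ)
  | acquire (m i : ℕ)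
  | release (m i : ℕ)
deriving DecidableEq

/-- An execution trace: a finite sequence of events together with the
thread that executes each event. -/
structure Trace where
  events : List Event
  thread : Event → ℕ

namespace Trace

/-- `tr.Before e e'`: event `e` occurs strictly before `e'` in the trace. -/
def Before (tr : Trace) (e e' : Event) : Prop :=
  ∃ i j : ℕ, i < j ∧ tr.events[i]? = some e ∧ tr.events[j]? = some e'

/-- Program order: `e <PO e'` iff `e` occurs strictly before `e'` in the trace
and both are executed by the same thread. -/
def PO (tr : Trace) (e e' : Event) : Prop :=
  tr.Before e e' ∧ tr.thread e = tr.thread e'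

/-- `≤PO`: the reflexive closure of program order. -/
def POle (tr : Trace) (e e' : Event) : Prop :=
  e = e' ∨ tr.PO e e'

/-- Happens-before: the smallest relation containing program order,
relating each release of a lock to every later acquire of the same lock,
and closed under composition with itself. -/
inductive HB (tr : Trace) : Event → Event → Prop
  | po {e e' : Event} : tr.PO e e' → HB tr e e'
  | sync {m i j : ℕ} : tr.Before (Event.release m i) (Event.acquire m j) →
      HB tr (Event.release m i) (Event.acquire m j)
  | trans {e e'' e' : Event} : HB tr e e'' → HB tr e'' e' → HB tr e e'

/-- `≤HB`: the reflexive closure of happens-before. -/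
def HBle (tr : Trace) (e e' : Event) : Prop :=
  e = e' ∨ tr.HB e e'

/-- The variable accessed by an event (writes and reads only). -/
def accessedVar : Event → Option ℕ
  | Event.write x _ => some x
  | Event.read x _ _ => some x
  | _ => none

/-- Whether an event is a write. -/
def IsWrite : Event → Prop
  | Event.write _ _ => True
  | _ => False

/-- Two events conflict if they access the same variable, at least one is a
write, and they are executed by different threads. -/
def Conflict (tr : Trace) (e e' : Event) : Prop :=
  (∃ x : ℕ, accessedVar e = some x ∧ accessedVar e' = some x) ∧
  (IsWrite e ∨ IsWrite e') ∧
  tr.thread e ≠ tr.thread e'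

/-- Causally-precedes: the smallest relation satisfying
(a) `rel(m,i) CP acq(m,j)` whenever two critical sections on `m` contain
conflicting events; (b) `rel(m,i) CP acq(m,j)` whenever
`acq(m,i) CP rel(m,j)`; and (c) closure under left and right
composition with happens-before. -/
inductive CP (tr : Trace) : Event → Event → Prop
  | ruleA {m i j : ℕ} {e e' : Event} :
      tr.Before e e' → tr.Conflict e e' →
      tr.POle (Event.acquire m i) e → tr.POle e (Event.release m i) →
      tr.POle (Event.acquire m j) e' → tr.POle e' (Event.release m j) →
      CP tr (Event.release m i) (Event.acquire m j)
  | ruleB {m i j : ℕ} :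
      CP tr (Event.acquire m i) (Event.release m j) →
      CP tr (Event.release m i) (Event.acquire m j)
  | ruleC_right {e e'' e' : Event} : CP tr e e'' → tr.HB e'' e' → CP tr e e'
  | ruleC_left {e e'' e' : Event} : tr.HB e e'' → CP tr e'' e' → CP tr e e'

/-- Well-formedness of an execution trace: events are pairwise distinct;
each release is preceded by the matching acquire; each acquire of a lock is
preceded by the release of the previous critical section on that lock
(a thread acquires only free locks, and critical sections on the same lock
do not overlap); an acquire and its matching release are executed by the
same thread; critical sections are well-nested; the writes to each variable
occur in index order; and a read `rd(x,i,T)` is executed by thread `T` and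
occurs after `wr(x,i)` and before `wr(x,i+1)`. -/
structure WellFormed (tr : Trace) : Prop where
  nodup : tr.events.Nodup
  acqBeforeRel : ∀ m i : ℕ, Event.release m i ∈ tr.events →
      Event.acquire m i ∈ tr.events ∧
      tr.Before (Event.acquire m i) (Event.release m i)
  relBeforeNextAcq : ∀ m i : ℕ, Event.acquire m (i + 1) ∈ tr.events →
      Event.release m i ∈ tr.events ∧
      tr.Before (Event.release m i) (Event.acquire m (i + 1))
  acqRelSameThread : ∀ m i : ℕ, Event.release m i ∈ tr.events →
      tr.thread (Event.acquire m i) = tr.thread (Event.release m i)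
  wellNested : ∀ m i n k : ℕ,
      tr.thread (Event.acquire m i) = tr.thread (Event.acquire n k) →
      Event.release m i ∈ tr.events →
      tr.Before (Event.acquire m i) (Event.acquire n k) →
      tr.Before (Event.acquire n k) (Event.release m i) →
      Event.release n k ∈ tr.events ∧
      tr.Before (Event.release n k) (Event.release m i)
  writesOrdered : ∀ x i : ℕ, Event.write x (i + 1) ∈ tr.events →
      Event.write x i ∈ tr.events ∧
      tr.Before (Event.write x i) (Event.write x (i + 1))
  readPlacement : ∀ x i T : ℕ, Event.read x i T ∈ tr.events →
      tr.thread (Event.read x i T) = T ∧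
      Event.write x i ∈ tr.events ∧
      tr.Before (Event.write x i) (Event.read x i T) ∧
      (Event.write x (i + 1) ∈ tr.events →
        tr.Before (Event.read x i T) (Event.write x (i + 1)))

/-- `tr` is a prefix of `tr'`: `tr'` is obtained from `tr` by appending
events at the end (and the thread assignment is unchanged). -/
def IsPrefixOf (tr tr' : Trace) : Prop :=
  tr.events <+: tr'.events ∧ tr.thread = tr'.thread

end Trace

/-- General form of Rule (b): if two critical sections on the
same lock `m`, with indices `i < j`, contain CP-ordered events, then
`acq(m,i) CP rel(m,j)` and hence `rel(m,i) CP acq(m,j)`. -/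
theorem cp_rule_b_general (tr : Trace) (hwf : tr.WellFormed)
    (m i j : ℕ) (hij : i < j) (f f' : Event)
    (h1 : tr.POle (Event.acquire m i) f) (h2 : tr.POle f (Event.release m i))
    (h3 : tr.POle (Event.acquire m j) f') (h4 : tr.POle f' (Event.release m j))
    (hcp : tr.CP f f') :
    tr.CP (Event.acquire m i) (Event.release m j) ∧
    tr.CP (Event.release m i) (Event.acquire m j) := by
  have step1 : tr.CP (Event.acquire m i) f' := by
    rcases h1 with rfl | hpo
    · exact hcp
    · exact Trace.CP.ruleC_left (Trace.HB.po hpo) hcp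
  have step2 : tr.CP (Event.acquire m i) (Event.release m j) := by
    rcases h4 with rfl | hpo
    · exact step1
    · exact Trace.CP.ruleC_right step1 (Trace.HB.po hpo)
  exact ⟨step2, Trace.CP.ruleB step2⟩
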